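/- arXiv:1011.0071 — 3 statements merged into one kernel-verified Lean document; each statement's English description precedes it below -/
import Mathlib

section
/- Let X be a real Banach space, κ an uncountable regular cardinal, and {x_α}_{α<κ} a dispersed sequence in X. If Z ⊆ X* is a norming subspace such that {x_α}_{α<κ} is σ(X,Z)-null, then there is a strictly increasing map σ ↦ α_σ from κ to κ such that {x_{α_σ}}_{σ<κ} is a transfinite basic sequence; if moreover Z is 1-norming, the subsequence can be chosen so that {x_{α_σ}}_{σ<κ} is a monotone transfinite basic sequence. -/
open Cardinal Ordinal Set Pointwise

universe u

noncomputable def closedSpan {X : Type u} [SeminormedAddCommGroup X] [NormedSpace ℝ X]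
    (s : Set X) : Submodule ℝ X :=
  (Submodule.span ℝ s).topologicalClosure

def IsDispersed {X : Type u} [SeminormedAddCommGroup X] [NormedSpace ℝ X]
    (x : Ordinal.{u} → X) (lam : Ordinal.{u}) : Prop :=
  ∀ β < lam,
    (⋂ γ ∈ Set.Iio lam, (closedSpan (x '' {α | γ < α ∧ α < lam}) : Set X)) ⊂
      (closedSpan (x '' {α | β < α ∧ α < lam}) : Set X)

/-- transfinite basic sequence with constant C -/
def IsBasicSeqWithConst {X : Type u} [SeminormedAddCommGroup X] [NormedSpace ℝ X]
    (x : Ordinal.{u} → X) (θ : Ordinal.{u}) (C : ℝ) : Prop :=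
  1 ≤ C ∧ (∀ α < θ, x α ≠ 0) ∧
  ∀ lam < θ, ∀ y ∈ closedSpan (x '' {α | α < lam}),
    ∀ z ∈ closedSpan (x '' {α | lam ≤ α ∧ α < θ}), ‖y‖ ≤ C * ‖y + z‖

/-- `Z ⊆ X*` is an `r`-norming subspace:
`inf_{x ∈ S_X} sup_{f ∈ Z, ‖f‖ ≤ 1} f(x) ≥ r`. -/
def IsRNorming {X : Type u} [SeminormedAddCommGroup X] [NormedSpace ℝ X]
    (Z : Submodule ℝ (X →L[ℝ] ℝ)) (r : ℝ) : Prop :=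
  ∀ x : X, ‖x‖ = 1 → ∀ ε > (0:ℝ), ∃ f ∈ Z, ‖f‖ ≤ 1 ∧ r - ε < f x

/-- the sequence is `σ(X,Z)`-null -/
def IsSigmaNull {X : Type u} [SeminormedAddCommGroup X] [NormedSpace ℝ X]
    (Z : Submodule ℝ (X →L[ℝ] ℝ)) (x : Ordinal.{u} → X) (θ : Ordinal.{u}) : Prop :=
  ∀ f ∈ Z, ∀ ε > (0:ℝ), ∃ β < θ, ∀ α, β < α → α < θ → |f (x α)| < ε

/-! At each stage of a transfinite recursion fewer than `κ` vectors have been chosen, so the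
closed span of the chosen vectors has a dense set `D` of rational combinations with
`#D < κ` (as `κ > ℵ₀`). For `d ∈ D` and `n : ℕ` pick `f ∈ Z`, `‖f‖ ≤ 1`, with
`f d ≥ (r - 1/(n+1)) ‖d‖`; `σ(X,Z)`-nullness makes `|f (x α)| < 1/(n+1)` on a tail of `κ`,
and by regularity all these tails start below a common `β < κ`. Every later index is taken
beyond `β` (and with `x α ≠ 0`, which dispersedness supplies cofinally). Then for `z` in the span
of the later vectors `f_n z → 0`, so `r ‖d‖ ≤ lim f_n (d + z) ≤ ‖d + z‖`, and by density this
gives `r ‖y‖ ≤ ‖y + z‖` on the closed spans: the subsequence is basic with constant `1/r`. -/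

open Filter Topology

theorem AddSubmonoid.mk_closure_le_max {M : Type u} [AddMonoid M] (s : Set M) :
    #(AddSubmonoid.closure s) ≤ max ℵ₀ #s := by
  have hs := FreeAddMonoid.mrange_lift ((↑) : s → M)
  rw [Subtype.range_coe] at hs
  rw [← hs]
  exact Cardinal.mk_range_le.trans (Cardinal.mk_list_le_max s)

variable {X : Type u} [NormedAddCommGroup X] [NormedSpace ℝ X]

def ratCombinations (S : Set X) : AddSubmonoid X :=
  AddSubmonoid.closure (range fun p : ℚ × S => (p.1 : ℝ) • (p.2 : X))

theorem mk_ratCombinations_lt {κ : Cardinal.{u}} (hκ : ℵ₀ < κ) {S : Set X} (hS : #S < κ) :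
    #(ratCombinations S) < κ := by
  refine (AddSubmonoid.mk_closure_le_max _).trans_lt (max_lt hκ ?_)
  refine Cardinal.mk_range_le.trans_lt ?_
  simp only [Cardinal.mk_prod, Cardinal.mk_eq_aleph0, Cardinal.lift_aleph0, Cardinal.lift_uzero]
  exact Cardinal.mul_lt_of_lt hκ.le hκ hS

theorem closedSpan_subset_closure_ratCombinations (S : Set X) :
    (closedSpan S : Set X) ⊆ closure (ratCombinations S) := by
  rw [closedSpan, Submodule.topologicalClosure_coe]
  refine closure_minimal (fun y hy => ?_) isClosed_closure
  obtain ⟨n, c, w, rfl⟩ := Submodule.mem_span_set'.1 hy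
  refine (ratCombinations S).topologicalClosure.sum_mem fun i _ => ?_
  have hc : c i ∈ closure (range ((↑) : ℚ → ℝ)) := Rat.denseRange_cast (c i)
  refine closure_mono ?_ (mem_closure_image (f := (· • (w i : X))) (by fun_prop) hc)
  rintro _ ⟨_, ⟨q, rfl⟩, rfl⟩
  exact AddSubmonoid.subset_closure ⟨(q, w i), rfl⟩

theorem tendsto_apply_of_mem_span {ι : Type*} {l : Filter ι} {f : ι → X →L[ℝ] ℝ} {W : Set X}
    (hW : ∀ w ∈ W, Tendsto (fun i => f i w) l (𝓝 0)) {z : X} (hz : z ∈ Submodule.span ℝ W) :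
    Tendsto (fun i => f i z) l (𝓝 0) := by
  induction hz using Submodule.span_induction with
  | mem w hw => exact hW w hw
  | zero => simpa using tendsto_const_nhds
  | add a b _ _ ha hb => simpa using ha.add hb
  | smul c a _ ha => simpa using ha.const_mul c

theorem mul_norm_le_norm_add_of_tendsto {f : ℕ → X →L[ℝ] ℝ} (hf : ∀ n, ‖f n‖ ≤ 1) {r : ℝ} {y : X}
    (hy : ∀ n : ℕ, (r - 1 / (n + 1)) * ‖y‖ ≤ f n y) {W : Set X}
    (hW : ∀ w ∈ W, Tendsto (fun n => f n w) atTop (𝓝 0)) {z : X} (hz : z ∈ Submodule.span ℝ W) :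
    r * ‖y‖ ≤ ‖y + z‖ := by
  have hlow : Tendsto (fun n : ℕ => (r - 1 / (n + 1)) * ‖y‖) atTop (𝓝 (r * ‖y‖)) := by
    simpa using (tendsto_one_div_add_atTop_nhds_zero_nat.const_sub r).mul_const ‖y‖
  have hup : Tendsto (fun n => ‖y + z‖ - f n z) atTop (𝓝 ‖y + z‖) := by
    simpa using (tendsto_apply_of_mem_span hW hz).const_sub ‖y + z‖
  refine le_of_tendsto_of_tendsto' hlow hup fun n => ?_
  have hyz : f n (y + z) ≤ ‖y + z‖ :=
    (le_abs_self _).trans (by simpa using (f n).le_of_opNorm_le (hf n) (y + z))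
  linarith [hy n, map_add (f n) y z]

theorem mul_norm_le_norm_add_of_mem_closure {r : ℝ} {D W : Set X}
    (h : ∀ d ∈ D, ∀ z ∈ Submodule.span ℝ W, r * ‖d‖ ≤ ‖d + z‖) :
    ∀ y ∈ closure D, ∀ z ∈ closedSpan W, r * ‖y‖ ≤ ‖y + z‖ := by
  have hP : IsClosed {p : X × X | r * ‖p.1‖ ≤ ‖p.1 + p.2‖} :=
    isClosed_le (by fun_prop) (by fun_prop)
  intro y hy z hz
  have hyz : (y, z) ∈ closure (D ×ˢ (Submodule.span ℝ W : Set X)) := by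
    rw [closure_prod_eq, ← Submodule.topologicalClosure_coe]
    exact ⟨hy, hz⟩
  exact hP.closure_subset_iff.2 (fun p hp => h p.1 hp.1 p.2 hp.2) hyz

theorem IsRNorming.exists_mul_norm_le {Z : Submodule ℝ (X →L[ℝ] ℝ)} {r : ℝ} (hr : IsRNorming Z r)
    (v : X) {ε : ℝ} (hε : 0 < ε) : ∃ f ∈ Z, ‖f‖ ≤ 1 ∧ (r - ε) * ‖v‖ ≤ f v := by
  rcases eq_or_ne v 0 with rfl | hv
  · exact ⟨0, Z.zero_mem, by simp, by simp⟩
  have hv' : 0 < ‖v‖ := norm_pos_iff.2 hv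
  obtain ⟨f, hfZ, hf1, hf⟩ := hr (‖v‖⁻¹ • v) (by simp [norm_smul, hv'.ne']) ε hε
  refine ⟨f, hfZ, hf1, ?_⟩
  rw [map_smul, _root_.smul_eq_mul] at hf
  calc (r - ε) * ‖v‖ ≤ (‖v‖⁻¹ * f v) * ‖v‖ := by gcongr
    _ = f v := by field_simp

theorem IsDispersed.exists_ne_zero {x : Ordinal.{u} → X} {lam : Ordinal.{u}}
    (hx : IsDispersed x lam) {β : Ordinal.{u}} (hβ : β < lam) :
    ∃ α, β < α ∧ α < lam ∧ x α ≠ 0 := by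
  by_contra! h
  have htail : closedSpan (x '' {α | β < α ∧ α < lam}) = ⊥ := by
    rw [closedSpan, Submodule.span_eq_bot.2 ?_,
      IsClosed.submodule_topologicalClosure_eq (by simp)]
    rintro _ ⟨α, ⟨hβα, hαl⟩, rfl⟩
    exact h α hβα hαl
  refine (hx β hβ).2 ?_
  rw [htail, Submodule.bot_coe]
  simp

theorem Cardinal.IsRegular.exists_forall_lt {κ : Cardinal.{u}} (hκ : κ.IsRegular)
    {A : Set Ordinal.{u}} (hA : A ⊆ Iio κ.ord) (hAκ : #A < Cardinal.lift.{u + 1} κ) :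
    ∃ β < κ.ord, ∀ a ∈ A, a < β := by
  have hbdd : BddAbove ((· + 1) '' A) := ⟨κ.ord, by
    rintro _ ⟨a, ha, rfl⟩
    exact Order.add_one_le_of_lt (hA ha)⟩
  refine ⟨sSup ((· + 1) '' A), Ordinal.sSup_add_one_lt_of_lt_cof ?_ hA, fun a ha => ?_⟩
  · rwa [← Ordinal.lift_cof, hκ.cof_ord]
  · exact (Order.lt_add_one_iff.2 le_rfl).trans_le (le_csSup hbdd ⟨a, ha, rfl⟩)

theorem Cardinal.IsRegular.exists_strictMonoOn {κ : Cardinal.{u}} (hκ : κ.IsRegular)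
    {good : Set Ordinal.{u}} (hgood : ∀ β < κ.ord, ∃ θ ∈ good, β < θ ∧ θ < κ.ord)
    {P : Set Ordinal.{u} → Ordinal.{u} → Prop}
    (hP : ∀ A ⊆ Iio κ.ord, #A < Cardinal.lift.{u + 1} κ → ∃ β < κ.ord, P A β) :
    ∃ φ : Ordinal.{u} → Ordinal.{u}, StrictMonoOn φ (Iio κ.ord) ∧
      ∀ σ < κ.ord, φ σ < κ.ord ∧ φ σ ∈ good ∧ ∃ β < φ σ, P (φ '' Iio σ) β := by
  let Next (A : Set Ordinal.{u}) (θ : Ordinal.{u}) : Prop :=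
    θ < κ.ord ∧ θ ∈ good ∧ (∃ β < θ, P A β) ∧ ∀ a ∈ A, a < θ
  have hNext : ∀ A ⊆ Iio κ.ord, #A < Cardinal.lift.{u + 1} κ → ∃ θ, Next A θ := by
    intro A hA hAκ
    obtain ⟨β, hβ, hPβ⟩ := hP A hA hAκ
    obtain ⟨γ, hγ, hAγ⟩ := hκ.exists_forall_lt hA hAκ
    obtain ⟨θ, hθ, hmax, hθκ⟩ := hgood (max β γ) (max_lt hβ hγ)
    exact ⟨θ, hθκ, hθ, ⟨β, (le_max_left _ _).trans_lt hmax, hPβ⟩,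
      fun a ha => (hAγ a ha).trans ((le_max_right _ _).trans_lt hmax)⟩
  let φ : Ordinal.{u} → Ordinal.{u} := Ordinal.lt_wf.fix fun σ rec =>
    Classical.epsilon (Next (range fun τ : Iio σ => rec τ τ.2))
  have hφ : ∀ σ, φ σ = Classical.epsilon (Next (φ '' Iio σ)) := fun σ => by
    rw [image_eq_range]
    exact Ordinal.lt_wf.fix_eq _ σ
  have hspec : ∀ σ < κ.ord, Next (φ '' Iio σ) (φ σ) := by
    intro σ
    induction σ using WellFoundedLT.induction with
    | _ σ ih =>
      intro hσ
      rw [hφ σ]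
      refine Classical.epsilon_spec (hNext _ ?_ ?_)
      · rintro _ ⟨τ, hτ, rfl⟩
        exact (ih τ hτ (lt_trans hτ hσ)).1
      · refine Cardinal.mk_image_le.trans_lt ?_
        rw [Cardinal.mk_Iio_ordinal, Cardinal.lift_lt]
        exact Cardinal.lt_ord.1 hσ
  refine ⟨φ, fun τ _ σ hσ hτσ => (hspec σ hσ).2.2.2 _ ⟨τ, hτσ, rfl⟩, fun σ hσ => ?_⟩
  obtain ⟨hσκ, hσgood, hβ, -⟩ := hspec σ hσ
  exact ⟨hσκ, hσgood, hβ⟩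

section TailNorming

variable {κ : Cardinal.{u}} {Z : Submodule ℝ (X →L[ℝ] ℝ)} {r : ℝ} {x : Ordinal.{u} → X}

theorem exists_almostNormingSeq (hκ : κ.IsRegular) (hunc : ℵ₀ < κ) (hr : IsRNorming Z r)
    (hnull : IsSigmaNull Z x κ.ord) {D : Set X} (hD : #D < κ) :
    ∃ β < κ.ord, ∀ d ∈ D, ∃ f : ℕ → X →L[ℝ] ℝ, (∀ n, ‖f n‖ ≤ 1) ∧
      (∀ n : ℕ, (r - 1 / (n + 1)) * ‖d‖ ≤ f n d) ∧
      ∀ α, β < α → α < κ.ord → Tendsto (fun n => f n (x α)) atTop (𝓝 0) := by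
  have hpos (n : ℕ) : (0 : ℝ) < 1 / (n + 1) := by positivity
  choose f hfZ hf1 hfd using fun (p : D × ℕ) => hr.exists_mul_norm_le p.1 (hpos p.2)
  choose b hbκ hb using fun (p : D × ℕ) => hnull (f p) (hfZ p) _ (hpos p.2)
  have hDℕ : #(D × ℕ) < κ.ord.cof := by
    simp only [hκ.cof_ord, Cardinal.mk_prod, Cardinal.mk_eq_aleph0, Cardinal.lift_aleph0,
      Cardinal.lift_uzero]
    exact Cardinal.mul_lt_of_lt hunc.le hD hunc
  refine ⟨⨆ p, b p, Ordinal.iSup_lt_of_lt_cof hDℕ hbκ, fun d hd =>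
    ⟨fun n => f (⟨d, hd⟩, n), fun n => hf1 (⟨d, hd⟩, n), fun n => hfd (⟨d, hd⟩, n),
      fun α hα hακ => ?_⟩⟩
  refine squeeze_zero_norm (fun n => (hb (⟨d, hd⟩, n) α ?_ hακ).le)
    tendsto_one_div_add_atTop_nhds_zero_nat
  exact (Ordinal.le_iSup b _).trans_lt hα

theorem exists_mul_norm_le_norm_add (hκ : κ.IsRegular) (hunc : ℵ₀ < κ) (hr : IsRNorming Z r)
    (hnull : IsSigmaNull Z x κ.ord) {S : Set X} (hS : #S < κ) :
    ∃ β < κ.ord, ∀ y ∈ closedSpan S, ∀ z ∈ closedSpan (x '' {α | β < α ∧ α < κ.ord}),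
      r * ‖y‖ ≤ ‖y + z‖ := by
  obtain ⟨β, hβ, hf⟩ :=
    exists_almostNormingSeq hκ hunc hr hnull (mk_ratCombinations_lt hunc hS)
  refine ⟨β, hβ, fun y hy => mul_norm_le_norm_add_of_mem_closure (fun d hd z hz => ?_) y
    (closedSpan_subset_closure_ratCombinations S hy)⟩
  obtain ⟨f, hf1, hfd, hfx⟩ := hf d hd
  refine mul_norm_le_norm_add_of_tendsto hf1 hfd ?_ hz
  rintro _ ⟨α, ⟨hβα, hακ⟩, rfl⟩
  exact hfx α hβα hακ

end TailNorming

theorem isBasicSeqWithConst_of_mul_norm_le {x : Ordinal.{u} → X} {θ : Ordinal.{u}} {r : ℝ}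
    (hr : 0 < r) (hx : ∀ α < θ, x α ≠ 0)
    (h : ∀ lam < θ, ∀ y ∈ closedSpan (x '' {α | α < lam}),
      ∀ z ∈ closedSpan (x '' {α | lam ≤ α ∧ α < θ}), r * ‖y‖ ≤ ‖y + z‖) :
    IsBasicSeqWithConst x θ (max 1 r⁻¹) := by
  refine ⟨le_max_left _ _, hx, fun lam hlam y hy z hz => ?_⟩
  calc ‖y‖ = r⁻¹ * (r * ‖y‖) := by field_simp
    _ ≤ max 1 r⁻¹ * ‖y + z‖ := by gcongr; exacts [le_max_right _ _, h lam hlam y hy z hz]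

theorem exists_isBasicSeqWithConst_subseq {κ : Cardinal.{u}} (hκ : κ.IsRegular) (hunc : ℵ₀ < κ)
    {x : Ordinal.{u} → X} (hdisp : IsDispersed x κ.ord) {Z : Submodule ℝ (X →L[ℝ] ℝ)}
    (hnull : IsSigmaNull Z x κ.ord) {r : ℝ} (hr0 : 0 < r) (hr : IsRNorming Z r) :
    ∃ φ : Ordinal.{u} → Ordinal.{u}, StrictMonoOn φ (Iio κ.ord) ∧ (∀ σ < κ.ord, φ σ < κ.ord) ∧
      IsBasicSeqWithConst (fun σ => x (φ σ)) κ.ord (max 1 r⁻¹) := by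
  obtain ⟨φ, hmono, hφ⟩ := hκ.exists_strictMonoOn (good := {θ | x θ ≠ 0})
    (fun β hβ => by simpa [and_comm, and_assoc] using hdisp.exists_ne_zero hβ)
    (P := fun A β => ∀ y ∈ closedSpan (x '' A),
      ∀ z ∈ closedSpan (x '' {α | β < α ∧ α < κ.ord}), r * ‖y‖ ≤ ‖y + z‖)
    (fun A _ hA => exists_mul_norm_le_norm_add hκ hunc hr hnull <| Cardinal.lift_lt.1 <|
      Cardinal.mk_image_le_lift.trans_lt (by rwa [Cardinal.lift_id'.{u, u + 1}]))
  refine ⟨φ, hmono, fun σ hσ => (hφ σ hσ).1, isBasicSeqWithConst_of_mul_norm_le hr0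
    (fun σ hσ => (hφ σ hσ).2.1) fun lam hlam y hy z hz => ?_⟩
  obtain ⟨β, hβ, hP⟩ := (hφ lam hlam).2.2
  refine hP y (by rwa [← image_comp]) z (Submodule.topologicalClosure_mono
    (Submodule.span_mono ?_) hz)
  rintro _ ⟨σ, ⟨hlamσ, hσ⟩, rfl⟩
  exact ⟨φ σ, ⟨hβ.trans_le (hmono.monotoneOn hlam hσ hlamσ), (hφ σ hσ).1⟩, rfl⟩

theorem stmt3_general {X : Type u} [NormedAddCommGroup X] [NormedSpace ℝ X]
    (κ : Cardinal.{u}) (hreg : κ.IsRegular) (hunc : ℵ₀ < κ)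
    (x : Ordinal.{u} → X) (hdisp : IsDispersed x κ.ord)
    (Z : Submodule ℝ (X →L[ℝ] ℝ)) (hnull : IsSigmaNull Z x κ.ord) :
    ((∃ r > (0:ℝ), IsRNorming Z r) →
      ∃ φ : Ordinal.{u} → Ordinal.{u}, StrictMonoOn φ (Set.Iio κ.ord) ∧
        (∀ σ < κ.ord, φ σ < κ.ord) ∧
        ∃ C : ℝ, IsBasicSeqWithConst (fun σ => x (φ σ)) κ.ord C) ∧
    (IsRNorming Z 1 →
      ∃ φ : Ordinal.{u} → Ordinal.{u}, StrictMonoOn φ (Set.Iio κ.ord) ∧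
        (∀ σ < κ.ord, φ σ < κ.ord) ∧
        IsBasicSeqWithConst (fun σ => x (φ σ)) κ.ord 1) := by
  refine ⟨fun ⟨r, hr0, hr⟩ => ?_, fun hr => ?_⟩
  · obtain ⟨φ, hmono, hφκ, hbasic⟩ :=
      exists_isBasicSeqWithConst_subseq hreg hunc hdisp hnull hr0 hr
    exact ⟨φ, hmono, hφκ, _, hbasic⟩
  · simpa using exists_isBasicSeqWithConst_subseq hreg hunc hdisp hnull one_pos hr

theorem stmt3 {X : Type u} [NormedAddCommGroup X] [NormedSpace ℝ X] [CompleteSpace X]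
    (κ : Cardinal.{u}) (hreg : κ.IsRegular) (hunc : ℵ₀ < κ)
    (x : Ordinal.{u} → X) (hdisp : IsDispersed x κ.ord)
    (Z : Submodule ℝ (X →L[ℝ] ℝ)) (hnull : IsSigmaNull Z x κ.ord) :
    ((∃ r > (0:ℝ), IsRNorming Z r) →
      ∃ φ : Ordinal.{u} → Ordinal.{u}, StrictMonoOn φ (Set.Iio κ.ord) ∧
        (∀ σ < κ.ord, φ σ < κ.ord) ∧
        ∃ C : ℝ, IsBasicSeqWithConst (fun σ => x (φ σ)) κ.ord C) ∧
    (IsRNorming Z 1 →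
      ∃ φ : Ordinal.{u} → Ordinal.{u}, StrictMonoOn φ (Set.Iio κ.ord) ∧
        (∀ σ < κ.ord, φ σ < κ.ord) ∧
        IsBasicSeqWithConst (fun σ => x (φ σ)) κ.ord 1) :=
  stmt3_general κ hreg hunc x hdisp Z hnull
end

section
/- Let X be a real Banach space, κ an uncountable regular cardinal, Y ⊆ X a nontrivial closed subspace whose density character is less than κ, and {Z_α}_{α<κ} a decreasing sequence of closed linear subspaces of X with ⋂_{α<κ}Z_α = {0}. Suppose that ⋂_{α<κ} cl(B_X + Z_α) ⊆ r·B_X for some real r with 1 ≤ r < ∞, where B_X is the closed unit ball and cl denotes norm closure. Then sup_{β<κ} dist(S_Y, Z_β) ≥ 1/r; that is, for every ε > 0 there exists β < κ such that dist(S_Y, Z_β) > 1/r − ε. -/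
/-! Suppose every `Z β` comes within `1/r - ε` of `S_Y`, with witnesses `y β ∈ S_Y`, `z β ∈ Z β`.
As `dens Y < κ` and `κ` is regular, one point `p` of a dense subset of `Y` of size `< κ` is
`ε/2`-close to `y γ` for cofinally many `γ`; since the `Z α` decrease, `p` is within
`c = 1/r - ε/2` of every `Z α`. Then `c⁻¹ • p ∈ B_X + Z α` for all `α`, so `‖p‖ ≤ r c = 1 - rε/2`,
contradicting `‖p‖ > 1 - ε/2` and `r ≥ 1`. -/

open Cardinal Ordinal Set Pointwise

universe u

/-- density character: least cardinality of a dense subset (at least `ℵ₀`). -/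
noncomputable def densChar (Y : Type u) [TopologicalSpace Y] : Cardinal.{u} :=
  max ℵ₀ (sInf {c : Cardinal.{u} | ∃ s : Set Y, Dense s ∧ #s = c})

theorem exists_dense_mk_le_densChar (Y : Type u) [TopologicalSpace Y] :
    ∃ s : Set Y, Dense s ∧ #s ≤ densChar Y := by
  obtain ⟨s, hs, hcard⟩ :=
    csInf_mem (s := {c : Cardinal.{u} | ∃ s : Set Y, Dense s ∧ #s = c}) ⟨_, univ, dense_univ, rfl⟩
  exact ⟨s, hs, hcard ▸ le_max_right _ _⟩

theorem Cardinal.IsRegular.exists_cofinal_fiber {κ : Cardinal.{u}} (hκ : κ.IsRegular)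
    {ι : Type u} (hι : #ι < κ) (f : Iio κ.ord → ι) :
    ∃ i, ∀ α < κ.ord, ∃ γ : Iio κ.ord, α ≤ γ ∧ f γ = i := by
  by_contra! h
  choose α hα hαf using h
  let γ : Iio κ.ord := ⟨⨆ i, α i, Ordinal.iSup_lt_of_lt_cof (by rwa [hκ.cof_ord]) hα⟩
  exact hαf (f γ) γ (Ordinal.le_iSup α _) rfl

theorem exists_cofinal_dist_lt_of_densChar_lt {E : Type u} [PseudoMetricSpace E]
    {κ : Cardinal.{u}} (hκ : κ.IsRegular) (hE : densChar E < κ) (f : Iio κ.ord → E)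
    {δ : ℝ} (hδ : 0 < δ) : ∃ p : E, ∀ α < κ.ord, ∃ γ : Iio κ.ord, α ≤ γ ∧ dist (f γ) p < δ := by
  obtain ⟨s, hs, hcard⟩ := exists_dense_mk_le_densChar E
  choose d hds hdist using fun γ => hs.exists_dist_lt (f γ) hδ
  obtain ⟨p, hp⟩ := hκ.exists_cofinal_fiber (hcard.trans_lt hE) fun γ => ⟨d γ, hds γ⟩
  refine ⟨p, fun α hα => ?_⟩
  obtain ⟨γ, hαγ, hγ⟩ := hp α hα
  exact ⟨γ, hαγ, by simpa [← hγ] using hdist γ⟩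

theorem smul_inv_mem_closedBall_add_of_norm_sub_le {X : Type*} [SeminormedAddCommGroup X]
    [NormedSpace ℝ X] {Z : Submodule ℝ X} {x z : X} {c : ℝ} (hc : 0 < c) (hz : z ∈ Z)
    (hxz : ‖x - z‖ ≤ c) : c⁻¹ • x ∈ Metric.closedBall (0 : X) 1 + (Z : Set X) := by
  refine ⟨c⁻¹ • (x - z), ?_, c⁻¹ • z, Z.smul_mem _ hz, by simp only [← smul_add, sub_add_cancel]⟩
  rw [mem_closedBall_zero_iff, norm_smul, norm_inv, Real.norm_of_nonneg hc.le]
  exact inv_mul_le_one_of_le₀ hxz hc.le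

theorem norm_le_mul_of_forall_exists_norm_sub_le {X ι : Type*} [SeminormedAddCommGroup X]
    [NormedSpace ℝ X] {Z : ι → Submodule ℝ X} {s : Set ι} {r c : ℝ} {x : X}
    (hrB : ⋂ α ∈ s, closure (Metric.closedBall (0 : X) 1 + (Z α : Set X)) ⊆
      Metric.closedBall (0 : X) r)
    (hc : 0 < c) (hx : ∀ α ∈ s, ∃ z ∈ Z α, ‖x - z‖ ≤ c) : ‖x‖ ≤ r * c := by
  have hmem : c⁻¹ • x ∈ Metric.closedBall (0 : X) r := hrB <| mem_iInter₂.2 fun α hα => by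
    obtain ⟨z, hz, hxz⟩ := hx α hα
    exact subset_closure (smul_inv_mem_closedBall_add_of_norm_sub_le hc hz hxz)
  rwa [mem_closedBall_zero_iff, norm_smul, norm_inv, Real.norm_of_nonneg hc.le, inv_mul_le_iff₀ hc,
    mul_comm] at hmem

theorem stmt8_general {X : Type u} [NormedAddCommGroup X] [NormedSpace ℝ X]
    (κ : Cardinal.{u}) (hreg : κ.IsRegular)
    (Y : Submodule ℝ X)
    (hYdens : densChar ↥Y < κ)
    (Z : Ordinal.{u} → Submodule ℝ X)
    (hZdec : ∀ α β, α ≤ β → β < κ.ord → Z β ≤ Z α)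
    (r : ℝ) (hr : 1 ≤ r)
    (hrB : (⋂ α ∈ Set.Iio κ.ord, closure (Metric.closedBall (0:X) 1 + (Z α : Set X))) ⊆
      Metric.closedBall (0:X) r) :
    ∀ ε > (0:ℝ), ∃ β < κ.ord, ∀ y ∈ Y, ‖y‖ = 1 → ∀ z ∈ Z β, 1 / r - ε < ‖y - z‖ := by
  intro ε hε
  by_contra! hcon
  choose y hyY hy1 z hzZ hyz using fun β : Iio κ.ord => hcon β β.2
  obtain ⟨p, hp⟩ := exists_cofinal_dist_lt_of_densChar_lt hreg hYdens
    (fun β => (⟨y β, hyY β⟩ : Y)) (half_pos hε)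
  simp_rw [Subtype.dist_eq, dist_eq_norm] at hp
  obtain ⟨γ₀, -, hγ₀⟩ := hp 0 (Cardinal.ord_pos.2 hreg.pos)
  have hp_norm : 1 - ε / 2 < ‖(p : X)‖ := by
    linarith [norm_sub_norm_le (y γ₀) p, hy1 γ₀]
  have hc : 0 < 1 / r - ε / 2 := by linarith [norm_nonneg (y γ₀ - z γ₀), hyz γ₀]
  have hp_le : ‖(p : X)‖ ≤ r * (1 / r - ε / 2) :=
    norm_le_mul_of_forall_exists_norm_sub_le hrB hc fun α hα => by
      obtain ⟨γ, hαγ, hγ⟩ := hp α hα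
      refine ⟨z γ, hZdec α γ hαγ γ.2 (hzZ γ), ?_⟩
      linarith [norm_sub_le_norm_sub_add_norm_sub (p : X) (y γ) (z γ), norm_sub_rev (p : X) (y γ),
        hyz γ]
  have hr_expand : r * (1 / r - ε / 2) = 1 - r * ε / 2 := by field_simp
  linarith [mul_le_mul_of_nonneg_right hr hε.le]

theorem stmt8 {X : Type u} [NormedAddCommGroup X] [NormedSpace ℝ X] [CompleteSpace X]
    (κ : Cardinal.{u}) (hreg : κ.IsRegular) (hunc : ℵ₀ < κ)
    (Y : Submodule ℝ X) (hYclosed : IsClosed (Y : Set X)) (hYne : Y ≠ ⊥)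
    (hYdens : densChar ↥Y < κ)
    (Z : Ordinal.{u} → Submodule ℝ X)
    (hZclosed : ∀ α < κ.ord, IsClosed ((Z α : Set X)))
    (hZdec : ∀ α β, α ≤ β → β < κ.ord → Z β ≤ Z α)
    (hZint : (⋂ α ∈ Set.Iio κ.ord, (Z α : Set X)) = {0})
    (r : ℝ) (hr : 1 ≤ r)
    (hrB : (⋂ α ∈ Set.Iio κ.ord, closure (Metric.closedBall (0:X) 1 + (Z α : Set X))) ⊆
      Metric.closedBall (0:X) r) :
    ∀ ε > (0:ℝ), ∃ β < κ.ord, ∀ y ∈ Y, ‖y‖ = 1 → ∀ z ∈ Z β, 1 / r - ε < ‖y - z‖ :=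
  stmt8_general κ hreg Y hYdens Z hZdec r hr hrB
end

section
/- Let 0 < k < ω and let X be a real Banach space satisfying condition (B) that admits a generating strongly dispersed sequence {x_α}_{α<ℵ_k} (i.e. [x_α : α<ℵ_k] = X). Then for every separable subspace Y ⊆ X there exist a closed subspace Z ⊆ X with dens(X/Z) ≤ ℵ_{k−1} and a separable subspace W with Y ⊆ W ⊆ Z such that W is the range of a bounded linear projection on Z. -/
open Cardinal Ordinal Set Pointwise

universe u

def IsStronglyDispersed {X : Type u} [SeminormedAddCommGroup X] [NormedSpace ℝ X]
    (x : Ordinal.{u} → X) (lam : Ordinal.{u}) : Prop :=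
  IsDispersed x lam ∧
    (⋂ β ∈ Set.Iio lam, (closedSpan (x '' {α | β < α ∧ α < lam}) : Set X)) = {0}

/-- condition (B) -/
def CondB (X : Type u) [SeminormedAddCommGroup X] [NormedSpace ℝ X] : Prop :=
  ∀ κ : Cardinal.{u}, κ.IsRegular → ℵ₀ < κ →
    ∀ Z : Ordinal.{u} → Submodule ℝ X,
      (∀ α < κ.ord, IsClosed ((Z α : Set X))) →
      (∀ α β, α ≤ β → β < κ.ord → Z β ≤ Z α) →
      (⋂ α ∈ Set.Iio κ.ord, (Z α : Set X)) = {0} →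
      Bornology.IsBounded
        (⋂ α ∈ Set.Iio κ.ord, closure (Metric.closedBall (0:X) 1 + (Z α : Set X)))

/-
The tails `T β = [x_α : β < α < ℵ_k]` form a decreasing family of closed subspaces with trivial
intersection, so condition (B) bounds `⋂ β, cl (B_X + T β)` by some `R`. By homogeneity every
vector `d` then satisfies `‖d‖ ≤ 2R ‖d - t‖` for all `t` in some tail. As `cf ℵ_k > ℵ₀`, a single
tail `T γ` does this for a countable dense subset of `W = cl Y`, hence for all of `W`. So `W + T γ`
is closed, the projection onto `W` along `T γ` has norm at most `2R`, and `X / (W + T γ)` is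
topologically spanned by the images of the at most `ℵ_{k-1}` vectors `x_α`, `α ≤ γ`.
-/

section NormSeparated

variable {E : Type*} [SeminormedAddCommGroup E]

def NormSeparated (C : ℝ) (S T : Set E) : Prop :=
  ∀ s ∈ S, ∀ t ∈ T, ‖s‖ ≤ C * ‖s - t‖

lemma NormSeparated.mono {C : ℝ} {S S' T T' : Set E} (h : NormSeparated C S T) (hS : S' ⊆ S)
    (hT : T' ⊆ T) : NormSeparated C S' T' :=
  fun s hs t ht => h s (hS hs) t (hT ht)

lemma NormSeparated.closure {C : ℝ} {S T : Set E} (h : NormSeparated C S T) :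
    NormSeparated C (closure S) T := by
  have hclosed : IsClosed {s : E | ∀ t ∈ T, ‖s‖ ≤ C * ‖s - t‖} := by
    simp only [ofPred_forall]
    exact isClosed_biInter fun t _ =>
      isClosed_le continuous_norm (continuous_const.mul (continuous_id.sub continuous_const).norm)
  exact closure_minimal h hclosed

end NormSeparated

section Decomposition

variable {E : Type*} [NormedAddCommGroup E] [NormedSpace ℝ E] {W T : Submodule ℝ E} {C : ℝ}

lemma NormSeparated.isCompl_comap_subtype_sup (h : NormSeparated C (W : Set E) T) :
    IsCompl (W.comap (W ⊔ T).subtype) (T.comap (W ⊔ T).subtype) := by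
  constructor
  · rw [Submodule.disjoint_def]
    intro z hzW hzT
    have := h z hzW z hzT
    rw [_root_.sub_self, norm_zero, mul_zero] at this
    exact norm_le_zero_iff.1 this
  · rw [codisjoint_iff, eq_top_iff]
    rintro ⟨z, hz⟩ -
    obtain ⟨w, hw, t, ht, rfl⟩ := Submodule.mem_sup.1 hz
    exact Submodule.mem_sup.2
      ⟨⟨w, Submodule.mem_sup_left hw⟩, hw, ⟨t, Submodule.mem_sup_right ht⟩, ht, rfl⟩

lemma NormSeparated.exists_projection_sup (h : NormSeparated C (W : Set E) T) :
    ∃ P : ↥(W ⊔ T) →L[ℝ] ↥(W ⊔ T), (∀ v, P (P v) = P v) ∧ (∀ v, (P v : E) ∈ W) ∧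
      ∀ v : ↥(W ⊔ T), (v : E) ∈ W → P v = v := by
  have hc := h.isCompl_comap_subtype_sup
  let p := (W.comap (W ⊔ T).subtype).projection _ hc
  have hbound : ∀ v, ‖p v‖ ≤ C * ‖v‖ := fun v => by
    simpa using h _ (Submodule.projection_apply_mem hc v) _
      (neg_mem (Submodule.sub_projection_mem hc v))
  refine ⟨p.mkContinuous C hbound, fun v => ?_, fun v => Submodule.projection_apply_mem hc v,
    fun v hv => Submodule.projection_apply_of_mem_left hc hv⟩
  exact Submodule.projection_apply_of_mem_left hc (Submodule.projection_apply_mem hc v)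

lemma NormSeparated.isClosed_sup [CompleteSpace E] (h : NormSeparated C (W : Set E) T)
    (hC : 0 ≤ C) (hW : IsClosed (W : Set E)) (hT : IsClosed (T : Set E)) :
    IsClosed ((W ⊔ T : Submodule ℝ E) : Set E) := by
  have := hW.completeSpace_coe
  have := hT.completeSpace_coe
  let f : W × T →L[ℝ] E := W.subtypeL.coprod T.subtypeL
  have hf : AntilipschitzWith ⟨C + 1, by positivity⟩ f := by
    refine f.antilipschitz_of_bound fun ⟨w, t⟩ => ?_
    have hw : ‖(w : E)‖ ≤ C * ‖(w : E) + t‖ := by simpa using h w w.2 (-t) (neg_mem t.2)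
    have ht : ‖(t : E)‖ ≤ ‖(w : E) + t‖ + ‖(w : E)‖ := by
      simpa using norm_sub_le ((w : E) + t) w
    simp only [Prod.norm_def, f, ContinuousLinearMap.coprod_apply, Submodule.subtypeL_apply,
      Submodule.coe_norm]
    change _ ≤ (C + 1) * _
    exact max_le (by nlinarith [norm_nonneg ((w : E) + t)]) (by linarith)
  have hrange : range f = ((W ⊔ T : Submodule ℝ E) : Set E) := by
    ext v
    simp [f, Submodule.mem_sup, eq_comm]
  rw [← hrange]
  exact hf.isClosed_range f.uniformContinuous

end Decomposition

section CondB

variable {X : Type*} [SeminormedAddCommGroup X] [NormedSpace ℝ X]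

lemma norm_le_mul_of_forall_exists_norm_sub_le_s12 {ι : Type*} {s : Set ι} {T : ι → Submodule ℝ X}
    {R r : ℝ} (hR : ∀ y ∈ ⋂ i ∈ s, closure (Metric.closedBall (0 : X) 1 + (T i : Set X)), ‖y‖ ≤ R)
    (hr : 0 < r) {y : X} (hy : ∀ i ∈ s, ∃ t ∈ T i, ‖y - t‖ ≤ r) : ‖y‖ ≤ R * r := by
  have hmem : r⁻¹ • y ∈ ⋂ i ∈ s, closure (Metric.closedBall (0 : X) 1 + (T i : Set X)) := by
    refine mem_iInter₂.2 fun i hi => subset_closure ?_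
    obtain ⟨t, ht, hyt⟩ := hy i hi
    refine ⟨r⁻¹ • (y - t), ?_, r⁻¹ • t, (T i).smul_mem _ ht, by simp [smul_sub]⟩
    rw [mem_closedBall_zero_iff, norm_smul, norm_inv, Real.norm_of_nonneg hr.le]
    exact inv_mul_le_one_of_le₀ hyt hr.le
  have := hR _ hmem
  rw [norm_smul, norm_inv, Real.norm_of_nonneg hr.le, inv_mul_le_iff₀ hr] at this
  linarith

lemma exists_normSeparated_singleton {ι : Type*} {s : Set ι} (hs : s.Nonempty)
    {T : ι → Submodule ℝ X} {R : ℝ} (hR0 : 0 < R)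
    (hR : ∀ y ∈ ⋂ i ∈ s, closure (Metric.closedBall (0 : X) 1 + (T i : Set X)), ‖y‖ ≤ R)
    (d : X) : ∃ i ∈ s, NormSeparated (2 * R) {d} (T i) := by
  by_contra! hcon
  simp only [NormSeparated, mem_singleton_iff, forall_eq, SetLike.mem_coe, not_forall,
    not_le] at hcon
  obtain ⟨i, hi⟩ := hs
  have hd : 0 < ‖d‖ := by
    obtain ⟨t, -, ht⟩ := hcon i hi
    exact lt_of_le_of_lt (by positivity) ht
  have := norm_le_mul_of_forall_exists_norm_sub_le_s12 hR (r := ‖d‖ / (2 * R)) (by positivity)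
    fun i hi => by
      obtain ⟨t, ht, hdt⟩ := hcon i hi
      exact ⟨t, ht, by rw [le_div_iff₀ (by positivity)]; linarith⟩
  have hval : R * (‖d‖ / (2 * R)) = ‖d‖ / 2 := by field_simp
  linarith

end CondB

section TailSpan

variable {X : Type u} [SeminormedAddCommGroup X] [NormedSpace ℝ X]

noncomputable def tailSpan (x : Ordinal.{u} → X) (lam β : Ordinal.{u}) : Submodule ℝ X :=
  closedSpan (x '' {α | β < α ∧ α < lam})

lemma isClosed_tailSpan (x : Ordinal.{u} → X) (lam β : Ordinal.{u}) :
    IsClosed (tailSpan x lam β : Set X) :=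
  Submodule.isClosed_topologicalClosure _

lemma antitone_tailSpan (x : Ordinal.{u} → X) (lam : Ordinal.{u}) : Antitone (tailSpan x lam) :=
  fun _ _ h => Submodule.topologicalClosure_mono
    (Submodule.span_mono (image_mono fun _ hα => ⟨h.trans_lt hα.1, hα.2⟩))

lemma apply_mem_tailSpan (x : Ordinal.{u} → X) {lam α β : Ordinal.{u}} (hβα : β < α)
    (hα : α < lam) : x α ∈ tailSpan x lam β :=
  Submodule.le_topologicalClosure _ (Submodule.subset_span ⟨α, ⟨hβα, hα⟩, rfl⟩)

end TailSpan

lemma CondB.exists_normSeparated {X : Type u} [SeminormedAddCommGroup X] [NormedSpace ℝ X]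
    (hB : CondB X) {κ : Cardinal.{u}} (hκ : κ.IsRegular) (hκ₀ : ℵ₀ < κ)
    {T : Ordinal.{u} → Submodule ℝ X} (hT : ∀ α, IsClosed (T α : Set X)) (hTanti : Antitone T)
    (hT0 : ⋂ α ∈ Iio κ.ord, (T α : Set X) = {0}) :
    ∃ C, 0 ≤ C ∧ ∀ d : X, ∃ β < κ.ord, NormSeparated C {d} (T β) := by
  obtain ⟨R, hR⟩ := isBounded_iff_forall_norm_le.1
    (hB κ hκ hκ₀ T (fun α _ => hT α) (fun _ _ h _ => hTanti h) hT0)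
  exact ⟨2 * max R 1, by positivity, exists_normSeparated_singleton ⟨0, hκ.ord_pos⟩
    (by positivity) fun y hy => (hR y hy).trans (le_max_left _ _)⟩

lemma exists_normSeparated_of_isSeparable {X : Type u} [SeminormedAddCommGroup X]
    {o : Ordinal.{u}} (ho : ℵ₀ < o.cof) {T : Ordinal.{u} → Set X} (hT : Antitone T) {C : ℝ}
    (hC : ∀ d : X, ∃ β < o, NormSeparated C {d} (T β)) {S : Set X}
    (hS : TopologicalSpace.IsSeparable S) : ∃ γ < o, NormSeparated C S (T γ) := by
  obtain ⟨c, hc, hSc⟩ := hS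
  choose β hβo hβ using fun d : c => hC d
  refine ⟨⨆ d, β d, Ordinal.iSup_lt_of_lt_cof (hc.le_aleph0.trans_lt ho) hβo, ?_⟩
  have hcγ : NormSeparated C c (T (⨆ d, β d)) := fun d hd t ht =>
    hβ ⟨d, hd⟩ d rfl t (hT (Ordinal.le_iSup β ⟨d, hd⟩) ht)
  exact hcγ.closure.mono hSc subset_rfl

lemma densChar_le_of_dense {Y : Type u} [TopologicalSpace Y] {s : Set Y} (hs : Dense s) :
    densChar Y ≤ max ℵ₀ #s :=
  max_le_max le_rfl (csInf_le' ⟨s, hs, rfl⟩)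

lemma exists_card_le_subset_closure_span {E : Type u} [SeminormedAddCommGroup E]
    [NormedSpace ℝ E] (s : Set E) :
    ∃ t : Set E, (Submodule.span ℝ s : Set E) ⊆ closure t ∧ #t ≤ max ℵ₀ #s := by
  let φ : (s →₀ ℚ) →+ E := (Finsupp.linearCombination ℝ ((↑) : s → E)).toAddMonoidHom.comp
    (Finsupp.mapRange.addMonoidHom (Rat.castHom ℝ).toAddMonoidHom)
  have hφ_smul (q : ℚ) (c : s →₀ ℚ) : φ (q • c) = (q : ℝ) • φ c := by
    simp only [φ, AddMonoidHom.coe_comp, Function.comp_apply, LinearMap.toAddMonoidHom_coe,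
      ← map_smul]
    congr 1
    ext i
    simp
  let S : Submodule ℝ E :=
    { φ.range.topologicalClosure with
      smul_mem' := fun r x hx => by
        refine map_mem_closure₂ (u := (φ.range : Set E)) continuous_smul (Rat.denseRange_cast r)
          hx ?_
        rintro _ ⟨q, rfl⟩ _ ⟨c, rfl⟩
        exact ⟨q • c, hφ_smul q c⟩ }
  refine ⟨range φ, fun v hv => (Submodule.span_le (p := S)).2 ?_ hv, ?_⟩
  · exact fun v hv => subset_closure ⟨Finsupp.single ⟨v, hv⟩ 1, by simp [φ]⟩
  · refine mk_range_le.trans ?_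
    rcases finite_or_infinite s with hs | hs
    · exact le_max_of_le_left mk_le_aleph0
    · rw [mk_finsupp_lift_of_infinite]
      simp

lemma densChar_le_of_dense_span {E : Type u} [SeminormedAddCommGroup E] [NormedSpace ℝ E]
    {s : Set E} (hs : Dense (Submodule.span ℝ s : Set E)) : densChar E ≤ max ℵ₀ #s := by
  obtain ⟨t, hst, ht⟩ := exists_card_le_subset_closure_span s
  exact (densChar_le_of_dense (dense_closure.1 (hs.mono hst))).trans (max_le (le_max_left _ _) ht)

lemma densChar_quotient_le {E : Type u} [SeminormedAddCommGroup E] [NormedSpace ℝ E]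
    (Z : Submodule ℝ E) {s s' : Set E} (hs : Dense (Submodule.span ℝ s : Set E))
    (hss' : s ⊆ s' ∪ Z) : densChar (E ⧸ Z) ≤ max ℵ₀ #s' := by
  have hdense : Dense (Submodule.span ℝ (Z.mkQ '' s') : Set (E ⧸ Z)) := by
    refine (Z.mkQ_surjective.denseRange.dense_image Z.continuous_mkQ hs).mono ?_
    rw [← Submodule.map_coe, Submodule.map_span, SetLike.coe_subset_coe, Submodule.span_le]
    rintro _ ⟨v, hv, rfl⟩
    rcases hss' hv with hv' | hv'
    · exact Submodule.subset_span ⟨v, hv', rfl⟩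
    · rw [SetLike.mem_coe, Submodule.mkQ_apply, (Submodule.Quotient.mk_eq_zero Z).2 hv']
      exact zero_mem _
  exact (densChar_le_of_dense_span hdense).trans (max_le_max le_rfl mk_image_le)

lemma card_le_aleph_of_lt_ord_aleph_add_one {o a : Ordinal} (h : o < (ℵ_ (a + 1)).ord) :
    o.card ≤ ℵ_ a := by
  rwa [lt_ord, ← succ_aleph, Order.lt_succ_iff] at h

lemma densChar_quotient_le_aleph {X : Type u} [SeminormedAddCommGroup X] [NormedSpace ℝ X]
    {x : Ordinal.{u} → X} {a γ : Ordinal.{u}}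
    (hgen : closedSpan (x '' Iio (ℵ_ (a + 1)).ord) = ⊤) (hγ : γ < (ℵ_ (a + 1)).ord)
    {Z : Submodule ℝ X} (hZ : tailSpan x (ℵ_ (a + 1)).ord γ ≤ Z) : densChar (X ⧸ Z) ≤ ℵ_ a := by
  refine (densChar_quotient_le Z (Submodule.dense_iff_topologicalClosure_eq_top.2 hgen)
    (s' := x '' Iio (Order.succ γ)) ?_).trans (max_le (aleph0_le_aleph _) ?_)
  · rintro _ ⟨α, hα, rfl⟩
    rcases lt_or_ge α (Order.succ γ) with hαγ | hαγ
    · exact Or.inl ⟨α, hαγ, rfl⟩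
    · exact Or.inr (hZ (apply_mem_tailSpan x (Order.succ_le_iff.1 hαγ) hα))
  · have := mk_image_le_lift (f := x) (s := Iio (Order.succ γ))
    rw [Cardinal.mk_Iio_ordinal, Cardinal.lift_lift, Cardinal.lift_le] at this
    exact this.trans (card_le_aleph_of_lt_ord_aleph_add_one
      ((isSuccLimit_ord (aleph0_le_aleph _)).succ_lt hγ))

theorem stmt12 {X : Type u} [NormedAddCommGroup X] [NormedSpace ℝ X] [CompleteSpace X]
    (k : ℕ) (hk : 0 < k) (hB : CondB X)
    (x : Ordinal.{u} → X)
    (hsd : IsStronglyDispersed x (Cardinal.aleph k).ord)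
    (hgen : closedSpan (x '' Set.Iio (Cardinal.aleph k).ord) = ⊤) :
    ∀ Y : Submodule ℝ X, TopologicalSpace.IsSeparable (Y : Set X) →
      ∃ Z : Submodule ℝ X, IsClosed (Z : Set X) ∧
        densChar (X ⧸ Z) ≤ Cardinal.aleph (k - 1 : ℕ) ∧
        ∃ W : Submodule ℝ X, TopologicalSpace.IsSeparable (W : Set X) ∧
          Y ≤ W ∧ W ≤ Z ∧
          ∃ P : ↥Z →L[ℝ] ↥Z,
            (∀ v, P (P v) = P v) ∧
            (∀ v : ↥Z, (P v : X) ∈ W) ∧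
            (∀ v : ↥Z, (v : X) ∈ W → P v = v) := by
  intro Y hY
  obtain ⟨m, rfl⟩ : ∃ m, k = m + 1 := ⟨k - 1, by omega⟩
  rw [Nat.cast_succ] at hsd hgen
  rw [Nat.add_sub_cancel]
  have hreg : (ℵ_ ((m : Ordinal.{u}) + 1)).IsRegular := isRegular_aleph_add_one _
  have hunc : ℵ₀ < ℵ_ ((m : Ordinal.{u}) + 1) := aleph0_lt_aleph.2 (by positivity)
  obtain ⟨C, hC0, hC⟩ := hB.exists_normSeparated hreg hunc (isClosed_tailSpan x _)
    (antitone_tailSpan x _) hsd.2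
  have hWsep : TopologicalSpace.IsSeparable (Y.topologicalClosure : Set X) :=
    Y.topologicalClosure_coe ▸ hY.closure
  obtain ⟨γ, hγ, hWT⟩ := exists_normSeparated_of_isSeparable (by rwa [hreg.cof_ord])
    (fun _ _ h => antitone_tailSpan x _ h) hC hWsep
  exact ⟨_, hWT.isClosed_sup hC0 Y.isClosed_topologicalClosure (isClosed_tailSpan x _ γ),
    densChar_quotient_le_aleph hgen hγ le_sup_right, _, hWsep, Y.le_topologicalClosure,
    le_sup_left, hWT.exists_projection_sup⟩
end
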